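/- Let μ₁, ν₁ ∈ L^∞(ℂ;ℂ) with ‖|μ₁| + |ν₁|‖_∞ ≤ k < 1, and define μ₂ := μ₁/(1 − |ν₁|²) and ν₂ := ν₁·conj(μ₁)/(1 − |ν₁|²). Then for every f ∈ L²(ℂ;ℂ) one has the operator identity Id − M_{μ₁}∘B − M_{ν₁}∘C = (Id − M_{ν₁}∘C) ∘ (Id − M_{μ₂}∘B − M_{ν₂}∘(C∘B)), i.e. f − μ₁·Bf − ν₁·conj(f) = (Id − M_{ν₁}∘C)( f − μ₂·Bf − ν₂·conj(Bf) ) almost everywhere. Moreover, if μ, ν ∈ L^∞(ℂ;ℂ) satisfy ‖|μ| + |ν|‖_∞ = k < 1 and μ₁ := μ/(1−|ν|²), ν₁ := ν·conj(μ)/(1−|ν|²), then ‖|μ₁| + |ν₁|‖_∞ ≤ k. -/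

import Mathlib

open MeasureTheory Filter Complex
open scoped Topology ENNReal

noncomputable def wD (φ : ℂ → ℂ) (z : ℂ) : ℂ :=
  (2⁻¹ : ℂ) * (fderiv ℝ φ z 1 - Complex.I * fderiv ℝ φ z Complex.I)

noncomputable def wDbar (φ : ℂ → ℂ) (z : ℂ) : ℂ :=
  (2⁻¹ : ℂ) * (fderiv ℝ φ z 1 + Complex.I * fderiv ℝ φ z Complex.I)

def IsTest (φ : ℂ → ℂ) : Prop := ContDiff ℝ (⊤ : ℕ∞) φ ∧ HasCompactSupport φ

def HasWeakWD (f g : ℂ → ℂ) : Prop :=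
  ∀ φ : ℂ → ℂ, IsTest φ → ∫ z : ℂ, g z * φ z = - ∫ z : ℂ, f z * wD φ z

def HasWeakWDbar (f g : ℂ → ℂ) : Prop :=
  ∀ φ : ℂ → ℂ, IsTest φ → ∫ z : ℂ, g z * φ z = - ∫ z : ℂ, f z * wDbar φ z

def MemLpLoc (f : ℂ → ℂ) (p : ℝ≥0∞) : Prop :=
  ∀ K : Set ℂ, IsCompact K → MemLp f p (volume.restrict K)

def MemW1pLoc (f : ℂ → ℂ) (p : ℝ≥0∞) : Prop :=
  ∃ f₁ f₂ : ℂ → ℂ, HasWeakWD f f₁ ∧ HasWeakWDbar f f₂ ∧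
    MemLpLoc f p ∧ MemLpLoc f₁ p ∧ MemLpLoc f₂ p

def MemW2pLoc (f : ℂ → ℂ) (p : ℝ≥0∞) : Prop :=
  ∃ f₁ f₂ f₁₁ f₁₂ f₂₁ f₂₂ : ℂ → ℂ,
    HasWeakWD f f₁ ∧ HasWeakWDbar f f₂ ∧
    HasWeakWD f₁ f₁₁ ∧ HasWeakWDbar f₁ f₁₂ ∧
    HasWeakWD f₂ f₂₁ ∧ HasWeakWDbar f₂ f₂₂ ∧
    MemLpLoc f p ∧ MemLpLoc f₁ p ∧ MemLpLoc f₂ p ∧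
    MemLpLoc f₁₁ p ∧ MemLpLoc f₁₂ p ∧ MemLpLoc f₂₁ p ∧ MemLpLoc f₂₂ p

noncomputable def pairR (u v : ℂ → ℂ) : ℝ :=
  ∫ z : ℂ, (u z * (starRingEnd ℂ) (v z)).re

/-- `f` is a distributional solution of `∂̄f = μ ∂f + ν conj(∂f) + h`, where
`Dμ` denotes the weak Wirtinger derivative `∂μ` and `Dνbar` denotes `∂̄ν`. -/
def IsDistribSol (μ ν Dμ Dνbar f h : ℂ → ℂ) : Prop :=
  ∀ φ : ℂ → ℂ, IsTest φ →
    - pairR f (wD φ)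
      + pairR f (fun z => φ z * (starRingEnd ℂ) (Dμ z))
      + pairR (fun z => (starRingEnd ℂ) (f z)) (fun z => φ z * (starRingEnd ℂ) (Dνbar z))
      + pairR f (fun z => (starRingEnd ℂ) (μ z) * wDbar φ z)
      + pairR (fun z => (starRingEnd ℂ) (f z)) (fun z => (starRingEnd ℂ) (ν z) * wD φ z)
      = pairR h φ

noncomputable def beurling (f : ℂ → ℂ) (z : ℂ) : ℂ :=
  limUnder (𝓝[>] (0 : ℝ))
    (fun ε : ℝ => -(1 / (Real.pi : ℂ)) * ∫ w in {w : ℂ | ε ≤ dist w z}, f w / (w - z) ^ 2)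

noncomputable def beurlingStar (f : ℂ → ℂ) (z : ℂ) : ℂ :=
  limUnder (𝓝[>] (0 : ℝ))
    (fun ε : ℝ => -(1 / (Real.pi : ℂ)) *
      ∫ w in {w : ℂ | ε ≤ dist w z},
        f w / ((starRingEnd ℂ) w - (starRingEnd ℂ) z) ^ 2)

/-- `μ₂ = μ₁ / (1 - |ν₁|²)`. -/
noncomputable def muTwo (μ₁ ν₁ : ℂ → ℂ) : ℂ → ℂ :=
  fun z => μ₁ z / ((1 - ‖ν₁ z‖ ^ 2 : ℝ) : ℂ)

/-- `ν₂ = ν₁ · conj μ₁ / (1 - |ν₁|²)`. -/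
noncomputable def nuTwo (μ₁ ν₁ : ℂ → ℂ) : ℂ → ℂ :=
  fun z => ν₁ z * (starRingEnd ℂ) (μ₁ z) / ((1 - ‖ν₁ z‖ ^ 2 : ℝ) : ℂ)

lemma ae_bound_of_eLpNormTop {g : ℂ → ℝ} {k : ℝ} (hk : 0 ≤ k) (hg : ∀ z, 0 ≤ g z)
    (h : eLpNorm g ⊤ (volume : Measure ℂ) ≤ ENNReal.ofReal k) :
    ∀ᵐ z ∂(volume : Measure ℂ), g z ≤ k := by
  rw [eLpNorm_exponent_top, eLpNormEssSup] at h
  filter_upwards [ae_le_essSup (f := fun z => (‖g z‖₊ : ℝ≥0∞))] with z hz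
  have h2 : (‖g z‖₊ : ℝ≥0∞) ≤ ENNReal.ofReal k := le_trans hz h
  rw [ENNReal.ofReal, ENNReal.coe_le_coe] at h2
  have h3 : ‖g z‖ ≤ (k.toNNReal : ℝ) := h2
  rw [Real.coe_toNNReal _ hk] at h3
  calc g z = ‖g z‖ := (Real.norm_of_nonneg (hg z)).symm
  _ ≤ k := h3

/-- Factorization of the operator `Id - M_{μ₁}∘B - M_{ν₁}∘C`:
for `‖|μ₁|+|ν₁|‖_∞ ≤ k < 1`, one has for every `f ∈ L²` the a.e. identity
`f - μ₁·Bf - ν₁·conj f = (Id - M_{ν₁}∘C)(f - μ₂·Bf - ν₂·conj(Bf))` with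
`μ₂ = μ₁/(1-|ν₁|²)`, `ν₂ = ν₁·conj μ₁/(1-|ν₁|²)`; moreover if `‖|μ|+|ν|‖_∞ = k < 1`
then the coefficients `μ₁ = μ/(1-|ν|²)`, `ν₁ = ν·conj μ/(1-|ν|²)` satisfy
`‖|μ₁|+|ν₁|‖_∞ ≤ k`. -/
theorem statement18
    (k : ℝ) (hk0 : 0 ≤ k) (hk1 : k < 1) :
    (∀ μ₁ ν₁ : ℂ → ℂ, MemLp μ₁ ⊤ volume → MemLp ν₁ ⊤ volume →
      eLpNorm (fun z => ‖μ₁ z‖ + ‖ν₁ z‖) ⊤ volume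
        ≤ ENNReal.ofReal k →
      ∀ f : ℂ → ℂ, MemLp f 2 volume →
        ∀ᵐ z ∂(volume : Measure ℂ),
          f z - μ₁ z * beurling f z - ν₁ z * (starRingEnd ℂ) (f z)
            = (f z - muTwo μ₁ ν₁ z * beurling f z
                  - nuTwo μ₁ ν₁ z * (starRingEnd ℂ) (beurling f z))
              - ν₁ z * (starRingEnd ℂ)
                  (f z - muTwo μ₁ ν₁ z * beurling f z
                    - nuTwo μ₁ ν₁ z * (starRingEnd ℂ) (beurling f z))) ∧
    (∀ μ ν : ℂ → ℂ,
      eLpNorm (fun z => ‖μ z‖ + ‖ν z‖) ⊤ volume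
        = ENNReal.ofReal k →
      eLpNorm (fun z => ‖muTwo μ ν z‖ + ‖nuTwo μ ν z‖) ⊤ volume
        ≤ ENNReal.ofReal k) := by
  constructor
  · intro μ₁ ν₁ _ _ hbound f _
    have hae : ∀ᵐ z ∂(volume : Measure ℂ),
        ‖μ₁ z‖ + ‖ν₁ z‖ ≤ k :=
      ae_bound_of_eLpNormTop hk0 (fun z => by positivity) hbound
    filter_upwards [hae] with z hz
    have hn : ‖ν₁ z‖ ≤ k :=
      le_trans (le_add_of_nonneg_left (by positivity)) hz
    have hd : (0 : ℝ) < 1 - ‖ν₁ z‖ ^ 2 := by nlinarith [norm_nonneg (ν₁ z)]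
    set a := f z
    set b := beurling f z
    set m := μ₁ z
    set n := ν₁ z
    have hdc : ((1 - ‖n‖ ^ 2 : ℝ) : ℂ) ≠ 0 := by
      exact_mod_cast hd.ne'
    have hkey : n * (starRingEnd ℂ) n = ((‖n‖ ^ 2 : ℝ) : ℂ) := by
      rw [Complex.mul_conj, Complex.sq_norm]
    have hd2 : n * (starRingEnd ℂ) n = ((‖n‖ : ℝ) : ℂ) ^ 2 := by
      rw [hkey]; push_cast; ring
    have hdc' : (1 : ℂ) - ((‖n‖ : ℝ) : ℂ) ^ 2 ≠ 0 := by
      push_cast at hdc; exact hdc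
    simp only [muTwo, nuTwo, map_sub, map_mul, map_div₀, Complex.conj_ofReal,
      Complex.conj_conj]
    push_cast
    rw [show (starRingEnd ℂ) (ν₁ z) = (starRingEnd ℂ) n from rfl]
    field_simp
    linear_combination (-m * b * (1 - ((‖n‖ : ℝ) : ℂ) ^ 2)⁻¹) * hd2 + m * b * mul_inv_cancel₀ hdc'
  · intro μ ν hbound
    have hae : ∀ᵐ z ∂(volume : Measure ℂ),
        ‖μ z‖ + ‖ν z‖ ≤ k :=
      ae_bound_of_eLpNormTop hk0 (fun z => by positivity) hbound.le
    rw [eLpNorm_exponent_top]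
    apply eLpNormEssSup_le_of_ae_bound (C := k)
    filter_upwards [hae] with z hz
    have hn : ‖ν z‖ ≤ k :=
      le_trans (le_add_of_nonneg_left (by positivity)) hz
    have hm : ‖μ z‖ ≤ k := le_trans (le_add_of_nonneg_right (by positivity)) hz
    have hd : (0 : ℝ) < 1 - ‖ν z‖ ^ 2 := by nlinarith [norm_nonneg (ν z)]
    have h1 : ‖muTwo μ ν z‖ = ‖μ z‖ / (1 - ‖ν z‖ ^ 2) := by
      simp only [muTwo, norm_div, Complex.norm_real, Real.norm_eq_abs, abs_of_pos hd]
    have h2 : ‖nuTwo μ ν z‖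
        = ‖ν z‖ * ‖μ z‖ / (1 - ‖ν z‖ ^ 2) := by
      simp only [nuTwo, norm_div, norm_mul, Complex.norm_real, Real.norm_eq_abs, abs_of_pos hd,
        Complex.norm_conj]
    rw [Real.norm_of_nonneg (by positivity), h1, h2]
    rw [← add_div, div_le_iff₀ hd]
    nlinarith [norm_nonneg (μ z), norm_nonneg (ν z)]
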